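/- arXiv:1605.04212 — 3 statements merged into one kernel-verified Lean document; each statement's English description precedes it below -/
import Mathlib

section
/- Let G be a real n×m matrix, let H₁ (n×n) and H₂ (m×m) be symmetric positive definite real matrices, and let K be a natural number. A real n×m matrix Γ* with rank(Γ*) ≤ K maximizes the objective Γ ↦ ⟨Γ, G⟩ − (1/2)‖H₁ Γ H₂‖_F² over the set {Γ : rank(Γ) ≤ K} if and only if the matrix Γ̃* = H₁ Γ* H₂ minimizes Γ̃ ↦ ‖Γ̃ − H₁⁻¹ G H₂⁻¹‖_F over the set {Γ̃ : rank(Γ̃) ≤ K}. -/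
open Matrix

/-- Frobenius inner product ⟨G, H⟩ = Tr(Gᵀ H). -/
noncomputable def frob {n m : ℕ} (G H : Matrix (Fin n) (Fin m) ℝ) : ℝ :=
  Matrix.trace (Gᵀ * H)

lemma frob_self_nonneg {n m : ℕ} (A : Matrix (Fin n) (Fin m) ℝ) : 0 ≤ frob A A := by
  unfold frob
  rw [Matrix.trace]
  apply Finset.sum_nonneg
  intro j _
  simp only [Matrix.diag_apply, Matrix.mul_apply, Matrix.transpose_apply]
  exact Finset.sum_nonneg fun i _ => mul_self_nonneg _

lemma frob_sub_sub {n m : ℕ} (A B : Matrix (Fin n) (Fin m) ℝ) :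
    frob (A - B) (A - B) = frob A A - 2 * frob A B + frob B B := by
  unfold frob
  simp [Matrix.transpose_sub, Matrix.sub_mul, Matrix.mul_sub, Matrix.trace_sub]
  rw [show Matrix.trace (Bᵀ * A) = Matrix.trace (Aᵀ * B) by
    rw [← Matrix.trace_transpose (Bᵀ * A), Matrix.transpose_mul, Matrix.transpose_transpose]]
  ring

lemma frob_cross {n m : ℕ} (G Γ : Matrix (Fin n) (Fin m) ℝ)
    (H1 : Matrix (Fin n) (Fin n) ℝ) (H2 : Matrix (Fin m) (Fin m) ℝ)
    (hH1 : H1.PosDef) (hH2 : H2.PosDef) :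
    frob (H1 * Γ * H2) (H1⁻¹ * G * H2⁻¹) = frob Γ G := by
  have hu1 : IsUnit H1.det := isUnit_iff_ne_zero.mpr hH1.det_pos.ne'
  have hu2 : IsUnit H2.det := isUnit_iff_ne_zero.mpr hH2.det_pos.ne'
  have h1 : H1ᵀ = H1 := by
    rw [← Matrix.conjTranspose_eq_transpose_of_trivial]; exact hH1.1
  have h2 : H2ᵀ = H2 := by
    rw [← Matrix.conjTranspose_eq_transpose_of_trivial]; exact hH2.1
  unfold frob
  rw [Matrix.transpose_mul, Matrix.transpose_mul, h1, h2]
  have key : H2 * (Γᵀ * H1) * (H1⁻¹ * G * H2⁻¹) = H2 * (Γᵀ * G) * H2⁻¹ := by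
    simp only [Matrix.mul_assoc]
    rw [← Matrix.mul_assoc H1 H1⁻¹, Matrix.mul_nonsing_inv _ hu1, Matrix.one_mul]
  rw [key, Matrix.trace_mul_cycle, ← Matrix.mul_assoc, Matrix.nonsing_inv_mul _ hu2,
    Matrix.one_mul]

/-- Lemma 1: a rank-≤K matrix Γ* maximizes Γ ↦ ⟨Γ, G⟩ − (1/2)‖H₁ Γ H₂‖_F² over
rank-≤K matrices iff Γ̃* = H₁ Γ* H₂ minimizes the Frobenius distance to
H₁⁻¹ G H₂⁻¹ over rank-≤K matrices. -/
theorem quad_max_iff_frobenius_min {n m : ℕ} (K : ℕ)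
    (G : Matrix (Fin n) (Fin m) ℝ)
    (H1 : Matrix (Fin n) (Fin n) ℝ) (H2 : Matrix (Fin m) (Fin m) ℝ)
    (hH1 : H1.PosDef) (hH2 : H2.PosDef)
    (Γs : Matrix (Fin n) (Fin m) ℝ) (hΓs : Γs.rank ≤ K) :
    (∀ Γ : Matrix (Fin n) (Fin m) ℝ, Γ.rank ≤ K →
        frob Γ G - (1 / 2) * frob (H1 * Γ * H2) (H1 * Γ * H2)
          ≤ frob Γs G - (1 / 2) * frob (H1 * Γs * H2) (H1 * Γs * H2)) ↔
    (∀ M : Matrix (Fin n) (Fin m) ℝ, M.rank ≤ K →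
        Real.sqrt (frob (H1 * Γs * H2 - H1⁻¹ * G * H2⁻¹)
            (H1 * Γs * H2 - H1⁻¹ * G * H2⁻¹))
          ≤ Real.sqrt (frob (M - H1⁻¹ * G * H2⁻¹) (M - H1⁻¹ * G * H2⁻¹))) := by
  have hu1 : IsUnit H1.det := isUnit_iff_ne_zero.mpr hH1.det_pos.ne'
  have hu2 : IsUnit H2.det := isUnit_iff_ne_zero.mpr hH2.det_pos.ne'
  set A := H1⁻¹ * G * H2⁻¹ with hA
  have ident : ∀ Γ : Matrix (Fin n) (Fin m) ℝ,
      frob Γ G - (1 / 2) * frob (H1 * Γ * H2) (H1 * Γ * H2)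
        = (1 / 2) * frob A A
          - (1 / 2) * frob (H1 * Γ * H2 - A) (H1 * Γ * H2 - A) := by
    intro Γ
    rw [frob_sub_sub, hA, frob_cross G Γ H1 H2 hH1 hH2]
    ring
  have hrank : ∀ Γ : Matrix (Fin n) (Fin m) ℝ, (H1 * Γ * H2).rank = Γ.rank := by
    intro Γ
    rw [Matrix.rank_mul_eq_left_of_isUnit_det _ _ hu2,
      Matrix.rank_mul_eq_right_of_isUnit_det _ _ hu1]
  constructor
  · intro hmax M hM
    set Γ := H1⁻¹ * M * H2⁻¹ with hΓdef
    have hMeq : H1 * Γ * H2 = M := by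
      rw [hΓdef]
      simp only [Matrix.mul_assoc]
      rw [← Matrix.mul_assoc H1 H1⁻¹, Matrix.mul_nonsing_inv _ hu1, Matrix.one_mul,
        Matrix.nonsing_inv_mul _ hu2, Matrix.mul_one]
    have hΓrank : Γ.rank ≤ K := by
      rw [← hrank Γ, hMeq]; exact hM
    have h := hmax Γ hΓrank
    rw [ident Γ, ident Γs, hMeq] at h
    apply Real.sqrt_le_sqrt
    linarith
  · intro hmin Γ hΓ
    have h := hmin (H1 * Γ * H2) (by rw [hrank]; exact hΓ)
    rw [ident Γ, ident Γs]
    have h' := (Real.sqrt_le_sqrt_iff (frob_self_nonneg _)).mp h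
    linarith
end

section
/- The function f : ℝ → ℝ defined by f(t) = ℓ(tΓ) is twice differentiable, and its first derivative at 0 equals the Frobenius inner product f'(0) = ⟨Γ, A − 𝟙_n pᵀ⟩, where Γ is identified with the n×C real matrix whose (i, (j,c)) entry is Γ_i^j(c). If moreover Γ satisfies the centering constraints ∑_{c=1}^{C_j} Γ_i^j(c) p^j(c) = 0 for every individual i and every variable j, then the second derivative at 0 equals f''(0) = −‖Γ D_p^{1/2}‖_F². -/
open Finset

/-- Sum of exponentials along the ray. -/
noncomputable def Sfun {k : ℕ} (p Γ : Fin k → ℝ) (t : ℝ) : ℝ :=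
  ∑ c, Real.exp (Real.log (p c) + t * Γ c)

/-- First derivative of `Sfun`. -/
noncomputable def Dfun {k : ℕ} (p Γ : Fin k → ℝ) (t : ℝ) : ℝ :=
  ∑ c, Γ c * Real.exp (Real.log (p c) + t * Γ c)

/-- Second derivative of `Sfun`. -/
noncomputable def DDfun {k : ℕ} (p Γ : Fin k → ℝ) (t : ℝ) : ℝ :=
  ∑ c, Γ c ^ 2 * Real.exp (Real.log (p c) + t * Γ c)

lemma Sfun_pos {k : ℕ} (p Γ : Fin k → ℝ) (t : ℝ) (c0 : Fin k) : 0 < Sfun p Γ t :=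
  Finset.sum_pos (fun c _ => Real.exp_pos _) ⟨c0, Finset.mem_univ _⟩

lemma hasDerivAt_exp_aux {k : ℕ} (p Γ : Fin k → ℝ) (c : Fin k) (t : ℝ) :
    HasDerivAt (fun t => Real.exp (Real.log (p c) + t * Γ c))
      (Γ c * Real.exp (Real.log (p c) + t * Γ c)) t := by
  have h1 : HasDerivAt (fun t : ℝ => Real.log (p c) + t * Γ c) (Γ c) t := by
    simpa using ((hasDerivAt_id t).mul_const (Γ c)).const_add (Real.log (p c))
  simpa [mul_comm] using h1.exp

lemma hasDerivAt_Sfun {k : ℕ} (p Γ : Fin k → ℝ) (t : ℝ) :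
    HasDerivAt (Sfun p Γ) (Dfun p Γ t) t :=
  HasDerivAt.fun_sum fun c _ => hasDerivAt_exp_aux p Γ c t

lemma hasDerivAt_Dfun {k : ℕ} (p Γ : Fin k → ℝ) (t : ℝ) :
    HasDerivAt (Dfun p Γ) (DDfun p Γ t) t := by
  refine HasDerivAt.fun_sum fun c _ => ?_
  simpa [pow_two, mul_assoc] using (hasDerivAt_exp_aux p Γ c t).const_mul (Γ c)

/-- The multilogit log-likelihood along the ray t ↦ ℓ(tΓ), expanded at the
independence intercepts β₀ = log p, is twice differentiable; its first derivative
at 0 is the Frobenius inner product ⟨Γ, A − 𝟙 pᵀ⟩, and, under the centering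
constraints ∑_c Γ_i^j(c) p^j(c) = 0, its second derivative at 0 is −‖Γ D_p^{1/2}‖_F². -/
theorem multilogit_taylor_at_independence {n m : ℕ} {Cc : Fin m → ℕ}
    (x : Fin n → (j : Fin m) → Fin (Cc j))
    (p : (j : Fin m) → Fin (Cc j) → ℝ)
    (hpdef : ∀ j c, p j c = ((Finset.univ.filter fun i => x i j = c).card : ℝ) / (n : ℝ))
    (hppos : ∀ j c, 0 < p j c)
    (Γ : Fin n → (j : Fin m) → Fin (Cc j) → ℝ)
    (f : ℝ → ℝ)
    (hf : ∀ t : ℝ, f t = ∑ i, ∑ j,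
        (Real.log (p j (x i j)) + t * Γ i j (x i j)
          - Real.log (∑ c, Real.exp (Real.log (p j c) + t * Γ i j c)))) :
    (Differentiable ℝ f ∧ Differentiable ℝ (deriv f)) ∧
    deriv f 0 = ∑ i, ∑ j, ∑ c,
        Γ i j c * ((if x i j = c then (1 : ℝ) else 0) - p j c) ∧
    ((∀ i j, ∑ c, Γ i j c * p j c = 0) →
      deriv (deriv f) 0 = -∑ i, ∑ j, ∑ c, (Γ i j c) ^ 2 * p j c) := by
  have hfun : f = fun t => ∑ i, ∑ j,
      (Real.log (p j (x i j)) + t * Γ i j (x i j)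
        - Real.log (Sfun (p j) (Γ i j) t)) := funext hf
  -- first derivative function
  set g : ℝ → ℝ := fun t => ∑ i, ∑ j,
      (Γ i j (x i j) - Dfun (p j) (Γ i j) t / Sfun (p j) (Γ i j) t) with hgdef
  -- second derivative function
  set h : ℝ → ℝ := fun t => ∑ i, ∑ j,
      -((DDfun (p j) (Γ i j) t * Sfun (p j) (Γ i j) t
          - Dfun (p j) (Γ i j) t * Dfun (p j) (Γ i j) t) / Sfun (p j) (Γ i j) t ^ 2)
    with hhdef
  have hdf : ∀ t, HasDerivAt f (g t) t := by
    intro t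
    rw [hfun]
    refine HasDerivAt.fun_sum fun i _ => HasDerivAt.fun_sum fun j _ => ?_
    have h1 : HasDerivAt (fun t : ℝ => Real.log (p j (x i j)) + t * Γ i j (x i j))
        (Γ i j (x i j)) t := by
      simpa using ((hasDerivAt_id t).mul_const (Γ i j (x i j))).const_add
        (Real.log (p j (x i j)))
    exact h1.sub ((hasDerivAt_Sfun (p j) (Γ i j) t).log
      (Sfun_pos (p j) (Γ i j) t (x i j)).ne')
  have hdg : ∀ t, HasDerivAt g (h t) t := by
    intro t
    refine HasDerivAt.fun_sum fun i _ => HasDerivAt.fun_sum fun j _ => ?_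
    exact ((hasDerivAt_Dfun (p j) (Γ i j) t).div (hasDerivAt_Sfun (p j) (Γ i j) t)
      (Sfun_pos (p j) (Γ i j) t (x i j)).ne').const_sub (Γ i j (x i j))
  have hderiv_f : deriv f = g := funext fun t => (hdf t).deriv
  have hDiff_f : Differentiable ℝ f := fun t => (hdf t).differentiableAt
  have hDiff_g : Differentiable ℝ (deriv f) := by
    rw [hderiv_f]; exact fun t => (hdg t).differentiableAt
  -- evaluation at 0
  have hE : ∀ (i : Fin n) (j : Fin m) (c : Fin (Cc j)),
      Real.exp (Real.log (p j c) + (0:ℝ) * Γ i j c) = p j c := by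
    intro i j c; rw [zero_mul, add_zero, Real.exp_log (hppos j c)]
  have hone : ∀ (i : Fin n) (j : Fin m), ∑ c, p j c = 1 := by
    intro i j
    have hn : (n : ℝ) ≠ 0 := by
      have : 0 < n := Fin.pos i
      positivity
    have hcard : ((univ : Finset (Fin n)).card : ℝ)
        = ∑ c, ((univ.filter fun i => x i j = c).card : ℝ) := by
      have := Finset.card_eq_sum_card_fiberwise
        (f := fun i => x i j) (s := (univ : Finset (Fin n))) (t := univ)
        (fun a _ => Finset.mem_univ _)
      exact_mod_cast this
    calc ∑ c, p j c = ∑ c, ((univ.filter fun i => x i j = c).card : ℝ) / n := by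
          simp [hpdef]
      _ = (∑ c, ((univ.filter fun i => x i j = c).card : ℝ)) / n := by
          rw [Finset.sum_div]
      _ = ((univ : Finset (Fin n)).card : ℝ) / n := by rw [hcard]
      _ = 1 := by simp [div_self hn]
  have hS0 : ∀ i j, Sfun (p j) (Γ i j) 0 = 1 := by
    intro i j
    simp only [Sfun, hE i j]
    exact hone i j
  have hD0 : ∀ i j, Dfun (p j) (Γ i j) 0 = ∑ c, Γ i j c * p j c := by
    intro i j
    simp only [Dfun, hE i j]
  have hDD0 : ∀ i j, DDfun (p j) (Γ i j) 0 = ∑ c, Γ i j c ^ 2 * p j c := by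
    intro i j
    simp only [DDfun, hE i j]
  refine ⟨⟨hDiff_f, hDiff_g⟩, ?_, ?_⟩
  · rw [hderiv_f, hgdef]
    refine Finset.sum_congr rfl fun i _ => Finset.sum_congr rfl fun j _ => ?_
    rw [hS0, hD0, div_one]
    have hite : ∑ c, Γ i j c * (if x i j = c then (1:ℝ) else 0) = Γ i j (x i j) := by
      simp [mul_ite, Finset.sum_ite_eq]
    rw [show (∑ c, Γ i j c * ((if x i j = c then (1:ℝ) else 0) - p j c))
        = (∑ c, Γ i j c * (if x i j = c then (1:ℝ) else 0)) - ∑ c, Γ i j c * p j c by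
      rw [← Finset.sum_sub_distrib]; exact Finset.sum_congr rfl fun c _ => by ring]
    rw [hite]
  · intro hc
    have hderiv_g : deriv (deriv f) = h := by
      rw [hderiv_f]; exact funext fun t => (hdg t).deriv
    rw [hderiv_g, hhdef]
    have key : ∀ i j, -((DDfun (p j) (Γ i j) 0 * Sfun (p j) (Γ i j) 0
        - Dfun (p j) (Γ i j) 0 * Dfun (p j) (Γ i j) 0) / Sfun (p j) (Γ i j) 0 ^ 2)
        = -(∑ c, Γ i j c ^ 2 * p j c) := by
      intro i j
      rw [hS0, hD0, hDD0, hc i j]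
      ring
    simp only [key, ← Finset.sum_neg_distrib]
end

section
/- Suppose Z_A = U D Vᵀ where U is a real n×r matrix with orthonormal columns (UᵀU = I_r), D is a real r×r diagonal matrix, and V is a real C×r matrix. Then Z_B = V D² Vᵀ, where D² = D·D. -/
open Matrix

/-- If the indicator-matrix pseudo-residuals factor as Z_A = U D Vᵀ with UᵀU = I and
D diagonal, then the Burt-matrix pseudo-residuals satisfy Z_B = V D² Vᵀ. -/
theorem burt_residuals_eigendecomposition {n C r : ℕ} (m : ℝ) (hm : 0 < m)
    (A : Matrix (Fin n) (Fin C) ℝ)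
    (p : Fin C → ℝ)
    (hpdef : ∀ c, p c = (1 / (n : ℝ)) * ∑ i, A i c)
    (hppos : ∀ c, 0 < p c)
    (U : Matrix (Fin n) (Fin r) ℝ) (d : Fin r → ℝ) (V : Matrix (Fin C) (Fin r) ℝ)
    (hU : Uᵀ * U = 1)
    (hsvd : (1 / Real.sqrt (m * n)) •
        ((A - Matrix.of fun _ c => p c)
          * Matrix.diagonal fun c => (Real.sqrt (p c))⁻¹)
      = U * Matrix.diagonal d * Vᵀ) :
    (1 / (m * n)) •
        ((Matrix.diagonal fun c => (Real.sqrt (p c))⁻¹)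
          * (Aᵀ * A - (n : ℝ) • Matrix.vecMulVec p p)
          * Matrix.diagonal fun c => (Real.sqrt (p c))⁻¹)
      = V * (Matrix.diagonal d * Matrix.diagonal d) * Vᵀ := by
  have key : ∀ c, ∑ i, A i c = (n : ℝ) * p c := by
    intro c
    rcases Nat.eq_zero_or_pos n with h | h
    · subst h; simp
    · have hn : (n : ℝ) ≠ 0 := Nat.cast_ne_zero.mpr h.ne'
      rw [hpdef c]; field_simp
  set E : Matrix (Fin n) (Fin C) ℝ := Matrix.of fun _ c => p c with hE
  set Dg : Matrix (Fin C) (Fin C) ℝ := Matrix.diagonal fun c => (Real.sqrt (p c))⁻¹ with hDg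
  have hcenter : (A - E)ᵀ * (A - E) = Aᵀ * A - (n : ℝ) • Matrix.vecMulVec p p := by
    ext b c
    simp only [Matrix.mul_apply, Matrix.transpose_apply, Matrix.sub_apply,
      Matrix.smul_apply, Matrix.vecMulVec_apply, hE, Matrix.of_apply, smul_eq_mul]
    have : ∀ i, (A i b - p b) * (A i c - p c)
        = A i b * A i c - p b * A i c - A i b * p c + p b * p c := by intro i; ring
    simp only [this, Finset.sum_add_distrib, Finset.sum_sub_distrib,
      ← Finset.mul_sum, ← Finset.sum_mul, key, Finset.sum_const, Finset.card_univ,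
      Fintype.card_fin, nsmul_eq_mul]
    ring
  have htt := congrArg (fun M => Mᵀ * M) hsvd
  simp only [Matrix.transpose_smul, Matrix.transpose_mul, Matrix.smul_mul,
    Matrix.mul_smul, smul_smul] at htt
  simp only [Matrix.transpose_transpose, hDg, Matrix.diagonal_transpose] at htt
  rw [← hDg] at htt
  have hscal : (1 / Real.sqrt (m * n)) * (1 / Real.sqrt (m * n)) = 1 / (m * n) := by
    rw [div_mul_div_comm, one_mul, Real.mul_self_sqrt (by positivity)]
  rw [hscal] at htt
  have hrhs : Matrix.diagonal d * Uᵀ * (U * Matrix.diagonal d * Vᵀ)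
      = Matrix.diagonal d * Matrix.diagonal d * Vᵀ := by
    calc Matrix.diagonal d * Uᵀ * (U * Matrix.diagonal d * Vᵀ)
        = Matrix.diagonal d * (Uᵀ * U) * Matrix.diagonal d * Vᵀ := by
          simp only [Matrix.mul_assoc]
      _ = Matrix.diagonal d * Matrix.diagonal d * Vᵀ := by rw [hU, Matrix.mul_one]
  calc (1 / (m * n)) • (Dg * (Aᵀ * A - (n : ℝ) • Matrix.vecMulVec p p) * Dg)
      = (1 / (m * n)) • (Dg * (A - E)ᵀ * ((A - E) * Dg)) := by
        rw [← hcenter]; simp only [Matrix.mul_assoc]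
    _ = V * (Matrix.diagonal d * Uᵀ * (U * Matrix.diagonal d * Vᵀ)) := by
        rw [htt]; simp only [Matrix.mul_assoc]
    _ = V * (Matrix.diagonal d * Matrix.diagonal d) * Vᵀ := by
        rw [hrhs]; simp only [Matrix.mul_assoc]
end
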